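/- For every integer k ≥ 3, the function ψ_k : (d_k,∞) → (0,∞) defined by ψ_k(d) = P[Po(λ_k(d)) ≥ k] is strictly increasing and continuous. -/

import Mathlib

/-!
Since `λ ↦ P[Po(λ) ≥ k]` is strictly increasing and continuous, it suffices to show that `λ_k` is.
For the largest solution of `f(λ) = d`, strict monotonicity only needs `f` continuous with
`f → ∞`; continuity additionally needs that `f` is strictly quasiconvex, so that no level just
below `d` can lose its solutions near `λ_k(d)`. For `f_k` this comes from the sign of the
derivative: with `P(λ) = P[Po(λ) ≥ k-1] = e^{-λ} λ^{k-1} ∑_i λ^i / (i+k-1)!`, the numerator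
`P - λ P'` of `f_k'` is `e^{-λ} λ^{k-1} (∑_i λ^i / (i+k-1)! - 1/(k-2)!)`, whose bracket increases
with `λ`, so `f_k'` changes sign at most once, from negative to positive.
-/

open Real Set Filter

/-- Upper tail of the Poisson distribution with mean `lam`:
`P[Po(lam) ≥ m] = ∑_{j ≥ m} e^{-lam} lam^j / j!`. -/
noncomputable def poTail (lam : ℝ) (m : ℕ) : ℝ :=
  ∑' j : ℕ, if m ≤ j then Real.exp (-lam) * lam ^ j / (j.factorial : ℝ) else 0

/-- `f_k(λ) = λ / P[Po(λ) ≥ k-1]`. -/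
noncomputable def fPW (k : ℕ) (lam : ℝ) : ℝ := lam / poTail lam (k - 1)

/-- `d_k = inf { f_k(λ) : λ > 0 }`. -/
noncomputable def dPW (k : ℕ) : ℝ := sInf (fPW k '' Set.Ioi (0 : ℝ))

open Topology Finset Nat

def StrictQuasiconvexOn (s : Set ℝ) (f : ℝ → ℝ) : Prop :=
  ∀ ⦃x⦄, x ∈ s → ∀ ⦃z⦄, z ∈ s → ∀ y ∈ Ioo x z, f y < max (f x) (f z)

theorem strictQuasiconvexOn_of_hasDerivAt {s : Set ℝ} {f f' : ℝ → ℝ} (hs : s.OrdConnected)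
    (hf : ∀ x ∈ s, HasDerivAt f (f' x) x)
    (hf' : ∀ x ∈ s, ∀ y ∈ s, x < y → 0 ≤ f' x → 0 < f' y) :
    StrictQuasiconvexOn s f := by
  intro x hx z hz y ⟨hxy, hyz⟩
  have hIcc : Icc x z ⊆ s := hs.out hx hz
  have hys : y ∈ s := hIcc ⟨hxy.le, hyz.le⟩
  have hcont : ContinuousOn f (Icc x z) := fun w hw =>
    (hf w (hIcc hw)).continuousAt.continuousWithinAt
  rcases le_or_gt 0 (f' y) with hy | hy
  · have hmono : StrictMonoOn f (Icc y z) := by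
      refine strictMonoOn_of_deriv_pos (convex_Icc y z) (hcont.mono (Icc_subset_Icc_left hxy.le))
        fun w hw => ?_
      rw [interior_Icc] at hw
      have hws : w ∈ s := hIcc ⟨hxy.trans hw.1 |>.le, hw.2.le⟩
      rw [(hf w hws).deriv]
      exact hf' y hys w hws hw.1 hy
    exact lt_max_of_lt_right (hmono (left_mem_Icc.2 hyz.le) (right_mem_Icc.2 hyz.le) hyz)
  · have hanti : StrictAntiOn f (Icc x y) := by
      refine strictAntiOn_of_deriv_neg (convex_Icc x y) (hcont.mono (Icc_subset_Icc_right hyz.le))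
        fun w hw => ?_
      rw [interior_Icc] at hw
      have hws : w ∈ s := hIcc ⟨hw.1.le, hw.2.trans hyz |>.le⟩
      rw [(hf w hws).deriv]
      by_contra! hw'
      exact hy.not_ge (hf' w hws y hys hw.2 hw').le
    exact lt_max_of_lt_left (hanti (left_mem_Icc.2 hxy.le) (right_mem_Icc.2 hxy.le) hxy)

section LargestRoot

variable {f r : ℝ → ℝ} {a D : ℝ}

theorem exists_gt_apply_eq (hf : ContinuousOn f (Ioi a)) (hf_top : Tendsto f atTop atTop)
    {x d : ℝ} (hx : a < x) (hfx : f x < d) : ∃ y, x < y ∧ f y = d := by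
  obtain ⟨M, hM⟩ := (hf_top.eventually_gt_atTop d).exists_forall_of_atTop
  obtain ⟨y, hy, hfy⟩ := intermediate_value_Icc (le_max_left x M)
    (hf.mono fun w hw => hx.trans_le hw.1) ⟨hfx.le, (hM _ (le_max_right x M)).le⟩
  exact ⟨y, hy.1.lt_of_ne (by rintro rfl; exact hfx.ne hfy), hfy⟩

theorem lt_apply_of_isGreatest (hf : ContinuousOn f (Ioi a)) (hf_top : Tendsto f atTop atTop)
    {d x₀ x : ℝ} (hx₀ : IsGreatest {x | a < x ∧ f x = d} x₀) (hx : x₀ < x) : d < f x := by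
  have hax : a < x := hx₀.1.1.trans hx
  by_contra! hfx
  rcases hfx.lt_or_eq with hfx | hfx
  · obtain ⟨y, hxy, hfy⟩ := exists_gt_apply_eq hf hf_top hax hfx
    exact (hx.trans hxy).not_ge (hx₀.2 ⟨hax.trans hxy, hfy⟩)
  · exact hx.not_ge (hx₀.2 ⟨hax, hfx⟩)

theorem strictMonoOn_of_isGreatest (hf : ContinuousOn f (Ioi a))
    (hf_top : Tendsto f atTop atTop) (hr : ∀ d, D < d → IsGreatest {x | a < x ∧ f x = d} (r d)) :
    StrictMonoOn r (Ioi D) := by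
  intro d hd d' hd' hdd'
  obtain ⟨⟨har, hfr⟩, -⟩ := hr d hd
  obtain ⟨y, hry, hfy⟩ := exists_gt_apply_eq hf hf_top har (hfr.trans_lt hdd')
  exact hry.trans_le ((hr d' hd').2 ⟨har.trans hry, hfy⟩)

theorem continuousOn_of_isGreatest (hf : ContinuousOn f (Ioi a))
    (hf_top : Tendsto f atTop atTop) (hq : StrictQuasiconvexOn (Ioi a) f)
    (hr : ∀ d, D < d → IsGreatest {x | a < x ∧ f x = d} (r d)) :
    ContinuousOn r (Ioi D) := by
  have hmono := strictMonoOn_of_isGreatest hf hf_top hr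
  intro d₀ hd₀
  obtain ⟨⟨har₀, hfr₀⟩, -⟩ := hr d₀ hd₀
  refine (hmono.continuousAt_of_exists_between (Ioi_mem_nhds hd₀) (fun b hb => ?_)
    fun b hb => ?_).continuousWithinAt
  · -- by quasiconvexity `f < d₀` strictly between `r d'` and `r d₀` for any level `d' < d₀`,
    -- so every level just below `d₀` is attained there
    obtain ⟨d', hd', hd'd₀⟩ := exists_between (mem_Ioi.1 hd₀)
    obtain ⟨⟨har', hfr'⟩, -⟩ := hr d' hd'
    obtain ⟨c, hbc, hcr₀⟩ := exists_between (max_lt hb (hmono hd' hd₀ hd'd₀))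
    have hfc : f c < d₀ := by
      simpa [hfr', hfr₀, hd'd₀.le] using
        hq har' har₀ c ⟨(le_max_right _ _).trans_lt hbc, hcr₀⟩
    obtain ⟨d, hd, hdd₀⟩ := exists_between (max_lt hfc (mem_Ioi.1 hd₀))
    have hac : a < c := har'.trans ((le_max_right _ _).trans_lt hbc)
    obtain ⟨y, hy, hfy⟩ := intermediate_value_Icc hcr₀.le (hf.mono fun w hw => hac.trans_le hw.1)
      ⟨(le_max_left _ _).trans_lt hd |>.le, hfr₀.symm ▸ hdd₀.le⟩
    have hDd : D < d := (le_max_right _ _).trans_lt hd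
    exact ⟨d, hDd, ((le_max_left _ _).trans hbc.le).trans
      (hy.1.trans ((hr d hDd).2 ⟨hac.trans_le hy.1, hfy⟩)), hmono hDd hd₀ hdd₀⟩
  · have hfb : d₀ < f b := lt_apply_of_isGreatest hf hf_top (hr d₀ hd₀) hb
    have hDfb : D < f b := (mem_Ioi.1 hd₀).trans hfb
    have hab : a < b := har₀.trans hb
    have hrb : r (f b) = b := by
      refine le_antisymm (not_lt.1 fun hbr => ?_) ((hr _ hDfb).2 ⟨hab, rfl⟩)
      have := hq har₀ (hr _ hDfb).1.1 b ⟨hb, hbr⟩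
      simp [hfr₀, (hr _ hDfb).1.2, hfb.le] at this
    exact ⟨f b, hDfb, by rw [hrb]; exact ⟨hb, le_rfl⟩⟩

end LargestRoot

theorem hasSum_exp_neg_mul_pow_div_factorial (lam : ℝ) :
    HasSum (fun j => exp (-lam) * lam ^ j / j !) 1 := by
  convert! (NormedSpace.expSeries_div_hasSum_exp lam).mul_left (exp (-lam)) using 1
  · simp_rw [mul_div_assoc]
  · simp [← exp_eq_exp_ℝ, ← exp_add]

theorem hasSum_nat_add_exp_neg_mul_pow_div_factorial (lam : ℝ) (m : ℕ) :
    HasSum (fun i => exp (-lam) * lam ^ (i + m) / (i + m)!)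
      (1 - ∑ j ∈ range m, exp (-lam) * lam ^ j / j !) :=
  (hasSum_nat_add_iff' m).2 (hasSum_exp_neg_mul_pow_div_factorial lam)

theorem poTail_eq_one_sub_sum (lam : ℝ) (m : ℕ) :
    poTail lam m = 1 - ∑ j ∈ range m, exp (-lam) * lam ^ j / j ! := by
  refine HasSum.tsum_eq ((hasSum_nat_add_iff' m).1 ?_)
  have hzero : ∑ j ∈ range m, (if m ≤ j then exp (-lam) * lam ^ j / j ! else 0) = 0 :=
    sum_eq_zero fun j hj => if_neg (not_le.2 (mem_range.1 hj))
  simpa [hzero] using hasSum_nat_add_exp_neg_mul_pow_div_factorial lam m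

theorem poTail_eq_tsum_nat_add (lam : ℝ) (m : ℕ) :
    poTail lam m = ∑' i, exp (-lam) * lam ^ (i + m) / (i + m)! := by
  rw [poTail_eq_one_sub_sum, (hasSum_nat_add_exp_neg_mul_pow_div_factorial lam m).tsum_eq]

theorem continuous_poTail (m : ℕ) : Continuous fun x => poTail x m := by
  simp_rw [poTail_eq_one_sub_sum]
  fun_prop

theorem hasDerivAt_sum_range_pow_div_factorial (m : ℕ) (x : ℝ) :
    HasDerivAt (fun y : ℝ => ∑ j ∈ range (m + 1), y ^ j / j !) (∑ j ∈ range m, x ^ j / j !) x := by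
  induction m with
  | zero => simpa using hasDerivAt_const x (1 : ℝ)
  | succ m ih =>
    simp_rw [sum_range_succ _ (m + 1)]
    refine (ih.add ((hasDerivAt_pow (m + 1) x).div_const ((m + 1)! : ℝ))).congr_deriv ?_
    rw [sum_range_succ, factorial_succ]
    push_cast
    field_simp

theorem hasDerivAt_poTail (m : ℕ) (x : ℝ) :
    HasDerivAt (fun y => poTail y (m + 1)) (exp (-x) * x ^ m / m !) x := by
  simp_rw [poTail_eq_one_sub_sum, mul_div_assoc, ← mul_sum]
  refine ((hasDerivAt_const x 1).sub (((hasDerivAt_neg x).exp).mul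
    (hasDerivAt_sum_range_pow_div_factorial m x))).congr_deriv ?_
  rw [sum_range_succ]
  ring

noncomputable def expTail (m : ℕ) (x : ℝ) : ℝ := ∑' i, x ^ i / (i + m)!

theorem summable_expTail (m : ℕ) {x : ℝ} (hx : 0 ≤ x) :
    Summable fun i => x ^ i / (i + m)! :=
  (Real.summable_pow_div_factorial x).of_nonneg_of_le (fun i => by positivity) fun i =>
    div_le_div_of_nonneg_left (by positivity) (by positivity)
      (cast_le.2 (factorial_le (Nat.le_add_right i m)))

theorem expTail_pos (m : ℕ) {x : ℝ} (hx : 0 ≤ x) : 0 < expTail m x :=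
  (summable_expTail m hx).tsum_pos (fun i => by positivity) 0 (by simp [factorial_pos])

theorem strictMonoOn_expTail (m : ℕ) : StrictMonoOn (expTail m) (Ici 0) := by
  intro x hx y hy hxy
  refine (summable_expTail m hx).tsum_lt_tsum (i := 1) (fun i => ?_) ?_ (summable_expTail m hy)
  · gcongr
  · simpa using div_lt_div_of_pos_right hxy (by positivity : (0 : ℝ) < (1 + m)!)

theorem poTail_eq_mul_expTail (lam : ℝ) (m : ℕ) :
    poTail lam m = exp (-lam) * lam ^ m * expTail m lam := by
  rw [poTail_eq_tsum_nat_add, expTail, ← tsum_mul_left]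
  congr 1 with i
  ring

theorem poTail_pos {lam : ℝ} (hlam : 0 < lam) (m : ℕ) : 0 < poTail lam m := by
  have := expTail_pos m hlam.le
  rw [poTail_eq_mul_expTail]
  positivity

theorem poTail_le_one {lam : ℝ} (hlam : 0 ≤ lam) (m : ℕ) : poTail lam m ≤ 1 := by
  rw [poTail_eq_one_sub_sum, sub_le_self_iff]
  exact sum_nonneg fun j _ => by positivity

theorem strictMonoOn_poTail {m : ℕ} (hm : m ≠ 0) :
    StrictMonoOn (fun x => poTail x m) (Ioi 0) := by
  obtain ⟨n, rfl⟩ := exists_eq_add_one_of_ne_zero hm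
  refine strictMonoOn_of_deriv_pos (convex_Ioi 0) (continuous_poTail _).continuousOn fun x hx => ?_
  rw [interior_Ioi] at hx
  rw [(hasDerivAt_poTail n x).deriv]
  have : 0 < x := hx
  positivity

theorem continuousOn_fPW (k : ℕ) : ContinuousOn (fPW k) (Ioi 0) := fun _ hx =>
  (continuousAt_id.div (continuous_poTail _).continuousAt (poTail_pos hx _).ne').continuousWithinAt

theorem tendsto_fPW_atTop (k : ℕ) : Tendsto (fPW k) atTop atTop := by
  refine tendsto_atTop_mono' atTop ?_ tendsto_id
  filter_upwards [eventually_gt_atTop 0] with x hx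
  exact le_div_self hx.le (poTail_pos hx _) (poTail_le_one hx.le _)

theorem hasDerivAt_fPW (n : ℕ) {x : ℝ} (hx : 0 < x) :
    HasDerivAt (fPW (n + 2))
      (exp (-x) * x ^ (n + 1) * (expTail (n + 1) x - 1 / n !) / poTail x (n + 1) ^ 2) x := by
  refine ((hasDerivAt_id x).div (hasDerivAt_poTail n x) (poTail_pos hx _).ne').congr_deriv ?_
  simp only [id, one_mul]
  congr 1
  rw [poTail_eq_mul_expTail]
  ring

theorem strictQuasiconvexOn_fPW {k : ℕ} (hk : 2 ≤ k) : StrictQuasiconvexOn (Ioi 0) (fPW k) := by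
  obtain ⟨n, rfl⟩ : ∃ n, k = n + 2 := ⟨k - 2, by omega⟩
  refine strictQuasiconvexOn_of_hasDerivAt ordConnected_Ioi (fun _ hx => hasDerivAt_fPW n hx)
    fun x hx y hy hxy hfx => ?_
  have hx : (0 : ℝ) < x := hx
  have hy : (0 : ℝ) < y := hy
  have hPx := poTail_pos hx (n + 1)
  have hPy := poTail_pos hy (n + 1)
  have hsign : 0 ≤ expTail (n + 1) x - 1 / n ! := by
    rwa [le_div_iff₀ (by positivity), zero_mul, mul_nonneg_iff_of_pos_left (by positivity)] at hfx
  have : expTail (n + 1) x < expTail (n + 1) y := strictMonoOn_expTail _ hx.le hy.le hxy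
  have : 0 < expTail (n + 1) y - 1 / n ! := by linarith
  positivity

theorem stmt_2 (k : ℕ) (hk : 3 ≤ k) (lamk : ℝ → ℝ)
    (hlam : ∀ d : ℝ, dPW k < d → 0 < lamk d ∧ fPW k (lamk d) = d ∧
      ∀ lam : ℝ, 0 < lam → fPW k lam = d → lam ≤ lamk d) :
    StrictMonoOn (fun d => poTail (lamk d) k) (Set.Ioi (dPW k)) ∧
    ContinuousOn (fun d => poTail (lamk d) k) (Set.Ioi (dPW k)) := by
  have hr : ∀ d, dPW k < d → IsGreatest {x | 0 < x ∧ fPW k x = d} (lamk d) := fun d hd =>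
    let ⟨hpos, hroot, hmax⟩ := hlam d hd
    ⟨⟨hpos, hroot⟩, fun x hx => hmax x hx.1 hx.2⟩
  have hf := continuousOn_fPW k
  have hf_top := tendsto_fPW_atTop k
  exact ⟨(strictMonoOn_poTail (by omega)).comp (strictMonoOn_of_isGreatest hf hf_top hr)
      fun d hd => (hr d hd).1.1,
    (continuous_poTail k).comp_continuousOn
      (continuousOn_of_isGreatest hf hf_top (strictQuasiconvexOn_fPW (by omega)) hr)⟩
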